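/- The universally convergent basic sequences on the edgeless cube Q_L are closed under ∼: if σ⃗ is a universally convergent basic sequence and τ⃗ is any basic sequence with τ⃗ ∼ σ⃗, then τ⃗ is universally convergent. -/

import Mathlib

universe u v

namespace InfRubik

/-- The three axes of the cube. -/
inductive Axis : Type
  | x | y | z
  deriving DecidableEq

/-- The six colors of the Rubik's cube.  A *configuration* is a map from cells to
`Option Color`, where `none` plays the role of the non-color `NaC`. -/
inductive Color : Type
  | red | white | green | orange | yellow | blue
  deriving DecidableEq

/-- The set `L̄† = -L ∪ {0} ∪ L ∪ {±∞}` of extended coordinates. -/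
inductive ExtCoord (L : Type u) : Type u
  | neg : L → ExtCoord L
  | zero : ExtCoord L
  | pos : L → ExtCoord L
  | negInf : ExtCoord L
  | posInf : ExtCoord L

namespace ExtCoord

variable {L : Type u}

/-- The reflection `r ↦ -r`. -/
def reflect : ExtCoord L → ExtCoord L
  | .neg r => .pos r
  | .zero => .zero
  | .pos r => .neg r
  | .negInf => .posInf
  | .posInf => .negInf

@[simp] theorem reflect_reflect (a : ExtCoord L) : a.reflect.reflect = a := by
  cases a <;> rfl

/-- Whether a coordinate is `±∞`. -/
def isInfB : ExtCoord L → Bool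
  | .negInf => true
  | .posInf => true
  | _ => false

@[simp] theorem isInfB_reflect (a : ExtCoord L) : a.reflect.isInfB = a.isInfB := by
  cases a <;> rfl

/-- Whether a coordinate is `0`. -/
def isZeroB : ExtCoord L → Bool
  | .zero => true
  | _ => false

@[simp] theorem isZeroB_reflect (a : ExtCoord L) : a.reflect.isZeroB = a.isZeroB := by
  cases a <;> rfl

end ExtCoord

/-- A point of the ambient space `L̄† × L̄† × L̄†`. -/
abbrev Triple (L : Type u) := ExtCoord L × ExtCoord L × ExtCoord L

/-- The coordinate of a point along an axis. -/
def Triple.coord {L : Type u} : Axis → Triple L → ExtCoord L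
  | .x, p => p.1
  | .y, p => p.2.1
  | .z, p => p.2.2

/-- Quarter-turn rotation of the ambient space about an axis (right-hand rule). -/
def rot {L : Type u} : Axis → Triple L → Triple L
  | .x, p => (p.1, p.2.2.reflect, p.2.1)
  | .y, p => (p.2.2, p.2.1, p.1.reflect)
  | .z, p => (p.2.1.reflect, p.1, p.2.2)

/-- Inverse quarter-turn rotation of the ambient space about an axis. -/
def rotInv {L : Type u} : Axis → Triple L → Triple L
  | .x, p => (p.1, p.2.2, p.2.1.reflect)
  | .y, p => (p.2.2.reflect, p.2.1, p.1)
  | .z, p => (p.2.1, p.1.reflect, p.2.2)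

@[simp] theorem rotInv_rot {L : Type u} (i : Axis) (p : Triple L) : rotInv i (rot i p) = p := by
  cases i <;> simp [rot, rotInv]

@[simp] theorem rot_rotInv {L : Type u} (i : Axis) (p : Triple L) : rot i (rotInv i p) = p := by
  cases i <;> simp [rot, rotInv]

/-- The number of infinite coordinates of a point. -/
def infCount {L : Type u} (p : Triple L) : ℕ :=
  (if p.1.isInfB then 1 else 0) + (if p.2.1.isInfB then 1 else 0) +
    (if p.2.2.isInfB then 1 else 0)

/-- The number of zero coordinates of a point. -/
def zeroCount {L : Type u} (p : Triple L) : ℕ :=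
  (if p.1.isZeroB then 1 else 0) + (if p.2.1.isZeroB then 1 else 0) +
    (if p.2.2.isZeroB then 1 else 0)

theorem infCount_rot {L : Type u} (i : Axis) (p : Triple L) : infCount (rot i p) = infCount p := by
  obtain ⟨a, b, c⟩ := p
  cases i <;> cases a <;> cases b <;> cases c <;> rfl

theorem infCount_rotInv {L : Type u} (i : Axis) (p : Triple L) :
    infCount (rotInv i p) = infCount p := by
  obtain ⟨a, b, c⟩ := p
  cases i <;> cases a <;> cases b <;> cases c <;> rfl

@[simp] theorem coord_rot_self {L : Type u} (i : Axis) (p : Triple L) :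
    (rot i p).coord i = p.coord i := by
  cases i <;> rfl

@[simp] theorem coord_rotInv_self {L : Type u} (i : Axis) (p : Triple L) :
    (rotInv i p).coord i = p.coord i := by
  cases i <;> rfl

/-- A cell of the *edgeless* cube `Q_L`: a point of the ambient space with exactly one
infinite coordinate. -/
def Cell (L : Type u) : Type u := {p : Triple L // infCount p = 1}

open Classical in
/-- The underlying map on points of the quarter-turn twist `T_{i,α}`. -/
noncomputable def qtTriple {L : Type u} (i : Axis) (α : ExtCoord L) (p : Triple L) : Triple L :=
  if p.coord i = α then rot i p else p

open Classical in
/-- The underlying map on points of the inverse quarter-turn twist `T_{i,α}⁻¹`. -/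
noncomputable def qtTripleInv {L : Type u} (i : Axis) (α : ExtCoord L) (p : Triple L) : Triple L :=
  if p.coord i = α then rotInv i p else p

theorem qtTripleInv_qtTriple {L : Type u} (i : Axis) (α : ExtCoord L) (p : Triple L) :
    qtTripleInv i α (qtTriple i α p) = p := by
  classical
  by_cases h : p.coord i = α <;> simp [qtTriple, qtTripleInv, h]

theorem qtTriple_qtTripleInv {L : Type u} (i : Axis) (α : ExtCoord L) (p : Triple L) :
    qtTriple i α (qtTripleInv i α p) = p := by
  classical
  by_cases h : p.coord i = α <;> simp [qtTriple, qtTripleInv, h]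

theorem infCount_qtTriple {L : Type u} (i : Axis) (α : ExtCoord L) (p : Triple L) :
    infCount (qtTriple i α p) = infCount p := by
  classical
  by_cases h : p.coord i = α <;> simp [qtTriple, h, infCount_rot]

theorem infCount_qtTripleInv {L : Type u} (i : Axis) (α : ExtCoord L) (p : Triple L) :
    infCount (qtTripleInv i α p) = infCount p := by
  classical
  by_cases h : p.coord i = α <;> simp [qtTripleInv, h, infCount_rotInv]

/-- The quarter-turn twist `T_{i,α}` of the edgeless cube, as a permutation of cells. -/
noncomputable def quarterTurn {L : Type u} (i : Axis) (α : ExtCoord L) : Equiv.Perm (Cell L) where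
  toFun c := ⟨qtTriple i α c.1, by rw [infCount_qtTriple]; exact c.2⟩
  invFun c := ⟨qtTripleInv i α c.1, by rw [infCount_qtTripleInv]; exact c.2⟩
  left_inv c := Subtype.ext (qtTripleInv_qtTriple i α c.1)
  right_inv c := Subtype.ext (qtTriple_qtTripleInv i α c.1)

/-- The basic twists of the edgeless cube: quarter turns, half turns and reverse
quarter turns of a single layer. -/
def IsBasic (L : Type u) (π : Equiv.Perm (Cell L)) : Prop :=
  ∃ (i : Axis) (α : ExtCoord L),
    π = quarterTurn i α ∨ π = quarterTurn i α ^ 2 ∨ π = (quarterTurn i α)⁻¹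

/-! ### The edged cube -/

/-- How a quarter-turn about axis `i` transports the face tag of a cell. -/
def tagMap : Axis → Axis → Axis
  | .x, .x => .x
  | .x, .y => .z
  | .x, .z => .y
  | .y, .x => .z
  | .y, .y => .y
  | .y, .z => .x
  | .z, .x => .y
  | .z, .y => .x
  | .z, .z => .z

@[simp] theorem tagMap_tagMap (i j : Axis) : tagMap i (tagMap i j) = j := by
  cases i <;> cases j <;> rfl

theorem isInfB_coord_tagMap_rot {L : Type u} (i j : Axis) (p : Triple L) :
    ((rot i p).coord (tagMap i j)).isInfB = (p.coord j).isInfB := by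
  cases i <;> cases j <;> simp [rot, Triple.coord, tagMap]

theorem isInfB_coord_tagMap_rotInv {L : Type u} (i j : Axis) (p : Triple L) :
    ((rotInv i p).coord (tagMap i j)).isInfB = (p.coord j).isInfB := by
  cases i <;> cases j <;> simp [rotInv, Triple.coord, tagMap]

/-- A cell of the *edged* cube `Q̄_L`: a point of the ambient space together with a tag
naming an axis, such that the coordinate along the tagged axis is infinite (the tag
indicates the face to which the cell belongs). -/
def ECell (L : Type u) : Type u := {q : Triple L × Axis // (q.1.coord q.2).isInfB = true}

open Classical in
/-- The underlying map of the quarter-turn twist `T_{i,α}` of the edged cube. -/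
noncomputable def eqtFun {L : Type u} (i : Axis) (α : ExtCoord L) (q : Triple L × Axis) :
    Triple L × Axis :=
  if q.1.coord i = α then (rot i q.1, tagMap i q.2) else q

open Classical in
/-- The underlying map of the reverse quarter-turn twist of the edged cube. -/
noncomputable def eqtFunInv {L : Type u} (i : Axis) (α : ExtCoord L) (q : Triple L × Axis) :
    Triple L × Axis :=
  if q.1.coord i = α then (rotInv i q.1, tagMap i q.2) else q

theorem eqtFunInv_eqtFun {L : Type u} (i : Axis) (α : ExtCoord L) (q : Triple L × Axis) :
    eqtFunInv i α (eqtFun i α q) = q := by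
  classical
  by_cases h : q.1.coord i = α <;> simp [eqtFun, eqtFunInv, h]

theorem eqtFun_eqtFunInv {L : Type u} (i : Axis) (α : ExtCoord L) (q : Triple L × Axis) :
    eqtFun i α (eqtFunInv i α q) = q := by
  classical
  by_cases h : q.1.coord i = α <;> simp [eqtFun, eqtFunInv, h]

theorem isInfB_eqtFun {L : Type u} (i : Axis) (α : ExtCoord L) (q : Triple L × Axis) :
    (((eqtFun i α q).1.coord (eqtFun i α q).2)).isInfB = ((q.1.coord q.2)).isInfB := by
  classical
  by_cases h : q.1.coord i = α <;> simp [eqtFun, h, isInfB_coord_tagMap_rot]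

theorem isInfB_eqtFunInv {L : Type u} (i : Axis) (α : ExtCoord L) (q : Triple L × Axis) :
    (((eqtFunInv i α q).1.coord (eqtFunInv i α q).2)).isInfB = ((q.1.coord q.2)).isInfB := by
  classical
  by_cases h : q.1.coord i = α <;> simp [eqtFunInv, h, isInfB_coord_tagMap_rotInv]

/-- The quarter-turn twist `T_{i,α}` of the edged cube, as a permutation of cells.  A face
twist moves, besides the cells of its face, also the coupled edge and corner cells of the
adjacent faces lying in the twisted layer. -/
noncomputable def equarterTurn {L : Type u} (i : Axis) (α : ExtCoord L) :
    Equiv.Perm (ECell L) where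
  toFun c := ⟨eqtFun i α c.1, by rw [isInfB_eqtFun]; exact c.2⟩
  invFun c := ⟨eqtFunInv i α c.1, by rw [isInfB_eqtFunInv]; exact c.2⟩
  left_inv c := Subtype.ext (eqtFunInv_eqtFun i α c.1)
  right_inv c := Subtype.ext (eqtFun_eqtFunInv i α c.1)

/-- The basic twists of the edged cube. -/
def IsEBasic (L : Type u) (π : Equiv.Perm (ECell L)) : Prop :=
  ∃ (i : Axis) (α : ExtCoord L),
    π = equarterTurn i α ∨ π = equarterTurn i α ^ 2 ∨ π = (equarterTurn i α)⁻¹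

/-! ### Transfinite sequences of twists and their action on labellings -/

open Classical in
/-- The eventual value of an ordinal-indexed family of `Option`-values: `some v` if the family
stabilizes on `some v` before `lam`, and `none` otherwise. -/
noncomputable def eventualVal {X : Type u} (lam : Ordinal.{v})
    (g : ∀ η, η < lam → Option X) : Option X :=
  if h : ∃ v : X, ∃ γ, γ < lam ∧ ∀ η (hη : η < lam), γ ≤ η → g η hη = some v
  then some h.choose else none

/-- Applying an ordinal-indexed sequence of permutations to an initial labelling:
`run σ f0 θ` is the labelling obtained after the first `θ` moves, with
`f_{η+1}(c) = f_η(σ_η⁻¹ c)` at successors and the eventual value (or `NaC = none`)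
at limits. -/
noncomputable def run {Cl : Type v} {X : Type u} (σ : Ordinal.{v} → Equiv.Perm Cl)
    (f0 : Cl → Option X) (θ : Ordinal.{v}) : Cl → Option X :=
  Ordinal.limitRecOn (motive := fun _ => Cl → Option X) θ f0
    (fun η fη c => fη ((σ η)⁻¹ c))
    (fun lam _ prev c => eventualVal lam (fun η h => prev η h c))

/-- A (transfinite) sequence of twists of length `len`, each of which satisfies the
predicate `B` (being a basic twist). -/
structure TwistSeq (Cl : Type v) (B : Equiv.Perm Cl → Prop) : Type (v + 1) where
  len : Ordinal.{v}
  seq : Ordinal.{v} → Equiv.Perm Cl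
  basic : ∀ η, η < len → B (seq η)

namespace TwistSeq

variable {Cl : Type v} {B : Equiv.Perm Cl → Prop}

/-- The terminal labelling obtained by applying a sequence of twists to `f0`. -/
noncomputable def terminal (s : TwistSeq Cl B) {X : Type u} (f0 : Cl → Option X) :
    Cl → Option X :=
  run s.seq f0 s.len

/-- A sequence of twists is convergent over `f0` if the terminal labelling is legal,
i.e. never takes the value `NaC = none`. -/
def ConvOver (s : TwistSeq Cl B) {X : Type u} (f0 : Cl → Option X) : Prop :=
  ∀ c, s.terminal f0 c ≠ none

/-- A sequence of twists is universally convergent if it is convergent over the identity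
labelling. -/
def UnivConv (s : TwistSeq Cl B) : Prop := s.ConvOver (fun c => some c)

/-- A sequence is twist-finite if each twist occurs in it only finitely many times. -/
def TwistFinite (s : TwistSeq Cl B) : Prop :=
  ∀ π : Equiv.Perm Cl, {η : Ordinal | η < s.len ∧ s.seq η = π}.Finite

/-- Two sequences are equivalent, `σ⃗ ∼ τ⃗`, when they produce the same terminal
configuration over every initial configuration. -/
def Sim (s t : TwistSeq Cl B) : Prop :=
  ∀ f : Cl → Option Color, s.terminal f = t.terminal f

/-- Concatenation of twist sequences: `s.concat t` performs `s` and then `t`. -/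
noncomputable def concat (s t : TwistSeq Cl B) : TwistSeq Cl B where
  len := s.len + t.len
  seq := fun η => if η < s.len then s.seq η else t.seq (η - s.len)
  basic := by
    intro η hη
    by_cases h : η < s.len
    · simpa [h] using s.basic η h
    · have hc : 0 < t.len := by
        rcases eq_zero_or_pos t.len with h0 | h0
        · rw [h0, add_zero] at hη; exact absurd hη h
        · exact h0
      have h2 : η - s.len < t.len := Ordinal.sub_lt_of_lt_add hη hc
      simpa [h] using t.basic _ h2

/-- The empty sequence of twists. -/
def empty (Cl : Type v) (B : Equiv.Perm Cl → Prop) : TwistSeq Cl B where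
  len := 0
  seq := fun _ => 1
  basic := fun η hη => absurd hη (by simp)

/-- `n`-fold self-concatenation of a sequence of twists. -/
noncomputable def npow (s : TwistSeq Cl B) : ℕ → TwistSeq Cl B
  | 0 => empty Cl B
  | n + 1 => (npow s n).concat s

end TwistSeq

/-- Basic sequences of twists of the edgeless cube `Q_L`. -/
abbrev BasicSeq (L : Type u) := TwistSeq (Cell L) (IsBasic L)

/-- Basic sequences of twists of the edged cube `Q̄_L`. -/
abbrev EBasicSeq (L : Type u) := TwistSeq (ECell L) (IsEBasic L)

/-- `f` is accessible from `f0` when some basic sequence applied to `f0` is convergent with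
terminal configuration `f`. -/
def Accessible {Cl : Type v} (B : Equiv.Perm Cl → Prop) (f0 f : Cl → Option Color) : Prop :=
  ∃ s : TwistSeq Cl B, s.ConvOver f0 ∧ s.terminal f0 = f

/-- A labelling is legal if it never takes the value `NaC = none`. -/
def IsLegal {Cl : Type v} {X : Type u} (f : Cl → Option X) : Prop := ∀ c, f c ≠ none

/-! ### Clusters, faces, and distinguished configurations -/

/-- The group of permutations of cells of the edgeless cube generated by the basic twists. -/
def twistGroup (L : Type u) : Subgroup (Equiv.Perm (Cell L)) :=
  Subgroup.closure {π | IsBasic L π}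

/-- The cluster of a cell of the edgeless cube: its orbit under the group generated by the
basic twists. -/
def cluster {L : Type u} (c : Cell L) : Set (Cell L) :=
  {d | ∃ g ∈ twistGroup L, g c = d}

/-- The group of permutations of cells of the edged cube generated by the basic twists. -/
def etwistGroup (L : Type u) : Subgroup (Equiv.Perm (ECell L)) :=
  Subgroup.closure {π | IsEBasic L π}

/-- The cluster of a cell of the edged cube. -/
def ecluster {L : Type u} (c : ECell L) : Set (ECell L) :=
  {d | ∃ g ∈ etwistGroup L, g c = d}

open Classical in
/-- The solved configuration of the edgeless cube: each face gets one of six distinct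
colors. -/
noncomputable def fSolved (L : Type u) : Cell L → Option Color := fun c =>
  if c.1.1 = ExtCoord.posInf then some .red
  else if c.1.1 = ExtCoord.negInf then some .orange
  else if c.1.2.1 = ExtCoord.posInf then some .blue
  else if c.1.2.1 = ExtCoord.negInf then some .green
  else if c.1.2.2 = ExtCoord.posInf then some .white
  else some .yellow

/-- The color of each face: the face is named by the axis and the sign (`true` = `+∞`). -/
def faceColor : Axis → Bool → Color
  | .x, true => .red
  | .x, false => .orange
  | .y, true => .blue
  | .y, false => .green
  | .z, true => .white
  | .z, false => .yellow

open Classical in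
/-- The solved configuration of the edged cube. -/
noncomputable def efSolved (L : Type u) : ECell L → Option Color := fun c =>
  if c.1.1.coord c.1.2 = ExtCoord.posInf then some (faceColor c.1.2 true)
  else some (faceColor c.1.2 false)

/-- A center cell of the edgeless cube: two of its coordinates are `0`. -/
def IsCenter {L : Type u} (c : Cell L) : Prop := zeroCount c.1 = 2

/-- The global rotation of the whole cube about an axis, as a permutation of the cells of
the edgeless cube. -/
def rotAllPerm {L : Type u} (i : Axis) : Equiv.Perm (Cell L) where
  toFun c := ⟨rot i c.1, by rw [infCount_rot]; exact c.2⟩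
  invFun c := ⟨rotInv i c.1, by rw [infCount_rotInv]; exact c.2⟩
  left_inv c := Subtype.ext (rotInv_rot i c.1)
  right_inv c := Subtype.ext (rot_rotInv i c.1)

/-- The group of global rotations of the edgeless cube. -/
def rotGroup (L : Type u) : Subgroup (Equiv.Perm (Cell L)) :=
  Subgroup.closure (Set.range (rotAllPerm (L := L)))

/-- A configuration of the edgeless cube is standard if every non-center cluster contains
exactly four cells of each of the six colors, and its restriction to the center cluster is
obtained from the solved configuration by a global rotation of the cube. -/
def Standard {L : Type u} (f : Cell L → Option Color) : Prop :=
  (∀ c : Cell L, ¬IsCenter c → ∀ γ : Color, {d ∈ cluster c | f d = some γ}.ncard = 4) ∧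
  ∃ g ∈ rotGroup L, ∀ d : Cell L, IsCenter d → f d = fSolved L (g⁻¹ d)

/-- A configuration is invariant under all quarter-turn face twists. -/
def FaceInvariant {L : Type u} (f : Cell L → Option Color) : Prop :=
  ∀ (i : Axis) (α : ExtCoord L), α.isInfB = true →
    ∀ c : Cell L, f ((quarterTurn i α)⁻¹ c) = f c

/-! ### Quadrants and cluster configurations -/

/-- The upper-right quadrant `D` of the Front face: the cells `(x, y, +∞)` with `x ∈ L`
and `y ∈ {0} ∪ L`; every non-center cluster has a unique representative in `D`. -/
def Dset (L : Type u) : Set (Cell L) :=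
  {c | ∃ (a : L) (b : ExtCoord L), (b = ExtCoord.zero ∨ ∃ r : L, b = ExtCoord.pos r) ∧
    c.1 = (ExtCoord.pos a, b, ExtCoord.posInf)}

/-- Two cells lie in the same face quadrant (an image of `D` under a global rotation). -/
def SameQuadrant {L : Type u} (d d' : Cell L) : Prop :=
  ∃ g ∈ rotGroup L, d ∈ (fun c => g c) '' Dset L ∧ d' ∈ (fun c => g c) '' Dset L

/-! ### Coupled cells of the edged cube -/

/-- Two cells of the edged cube are coupled if they occupy the same location but belong to
different faces (they are parts of a common edge or corner cubie). -/
def Coupled {L : Type u} (c c' : ECell L) : Prop := c.1.1 = c'.1.1 ∧ c.1.2 ≠ c'.1.2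

/-- An edge cell: exactly two infinite coordinates. -/
def IsEdgeCell {L : Type u} (c : ECell L) : Prop := infCount c.1.1 = 2

/-- A corner cell: three infinite coordinates. -/
def IsCornerCell {L : Type u} (c : ECell L) : Prop := infCount c.1.1 = 3

/-- An edge-cross cell: an edge cell one of whose coordinates is `0`. -/
def IsEdgeCross {L : Type u} (c : ECell L) : Prop :=
  IsEdgeCell c ∧ 0 < zeroCount c.1.1

end InfRubik

/-!
Every twist preserves the multiset of unsigned coordinates of a cell, so the cluster `V` of a
cell `c` is finite; it is also invariant under twists, so the value at `c` of a run depends only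
on the initial labelling on `V`. There the identity labelling is, up to an injective map, the
product of the `|V|` indicator colourings of `V`. A run over a labelling valued in a finite
product converges once every coordinate does (finitely many stabilisation times have a supremum
below the limit), and composing a labelling with an injective map does not create convergence.
As `τ⃗ ∼ σ⃗` equates the terminal configurations of the indicator colourings, convergence at `c`
transfers from `σ⃗` to `τ⃗`.
-/

universe w

namespace InfRubik

open Set Function

section Run

variable {Cl : Type v} {X : Type u} {Y : Type w} {σ : Ordinal.{v} → Equiv.Perm Cl}

theorem eventualVal_eq_some_iff {lam : Ordinal.{v}} {g : ∀ η, η < lam → Option X} {x : X} :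
    eventualVal lam g = some x ↔ ∃ γ < lam, ∀ η (hη : η < lam), γ ≤ η → g η hη = some x := by
  unfold eventualVal
  split_ifs with h
  · obtain ⟨γ, hγ, hg⟩ := h.choose_spec
    refine ⟨fun hx => ⟨γ, hγ, by simpa [Option.some_inj.1 hx] using hg⟩, ?_⟩
    rintro ⟨γ', hγ', hg'⟩
    have hmax := max_lt hγ hγ'
    rw [← Option.some_inj, ← hg _ hmax (le_max_left _ _), hg' _ hmax (le_max_right _ _)]
  · exact ⟨fun hx => absurd hx nofun, fun ⟨γ, hγ, hg⟩ => absurd ⟨x, γ, hγ, hg⟩ h⟩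

variable (σ) in
theorem run_zero (f : Cl → Option X) : run σ f 0 = f :=
  Ordinal.limitRecOn_zero _ _ _

variable (σ) in
theorem run_add_one (f : Cl → Option X) (θ : Ordinal.{v}) :
    run σ f (θ + 1) = fun c => run σ f θ ((σ θ)⁻¹ c) :=
  Ordinal.limitRecOn_add_one _ _ _ _

variable (σ) in
theorem run_of_isSuccLimit (f : Cl → Option X) {lam : Ordinal.{v}}
    (hlam : Order.IsSuccLimit lam) (c : Cl) :
    run σ f lam c = eventualVal lam fun η _ => run σ f η c :=
  congrFun (Ordinal.limitRecOn_limit (motive := fun _ => Cl → Option X) _ _ _ _ hlam) c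

variable (σ) in
theorem run_eq_some_iff_of_isSuccLimit (f : Cl → Option X) {lam : Ordinal.{v}}
    (hlam : Order.IsSuccLimit lam) {c : Cl} {x : X} :
    run σ f lam c = some x ↔ ∃ γ < lam, ∀ η < lam, γ ≤ η → run σ f η c = some x := by
  rw [run_of_isSuccLimit _ _ hlam, eventualVal_eq_some_iff]

theorem run_map_eq_some (g : X → Y) {f : Cl → Option X} {θ : Ordinal.{v}} {c : Cl} {x : X}
    (h : run σ f θ c = some x) : run σ (Option.map g ∘ f) θ c = some (g x) := by
  induction θ using Ordinal.limitRecOn generalizing c with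
  | zero => rw [run_zero] at h ⊢; simp [h]
  | add_one θ ih => rw [run_add_one] at h ⊢; exact ih h
  | limit lam hlam ih =>
    rw [run_eq_some_iff_of_isSuccLimit _ _ hlam] at h ⊢
    obtain ⟨γ, hγ, hst⟩ := h
    exact ⟨γ, hγ, fun η hη hγη => ih η hη (hst η hη hγη)⟩

theorem exists_run_eq_some_of_run_map_eq_some {g : X → Y} (hg : Injective g) {f : Cl → Option X}
    {θ : Ordinal.{v}} {c : Cl} {y : Y} (h : run σ (Option.map g ∘ f) θ c = some y) :
    ∃ x, g x = y ∧ run σ f θ c = some x := by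
  induction θ using Ordinal.limitRecOn generalizing c with
  | zero =>
    rw [run_zero] at h ⊢
    obtain ⟨x, hx, rfl⟩ := Option.map_eq_some_iff.1 h
    exact ⟨x, rfl, hx⟩
  | add_one θ ih => rw [run_add_one] at h ⊢; exact ih h
  | limit lam hlam ih =>
    rw [run_eq_some_iff_of_isSuccLimit _ _ hlam] at h
    obtain ⟨γ, hγ, hst⟩ := h
    obtain ⟨x, rfl, -⟩ := ih γ hγ (hst γ hγ le_rfl)
    refine ⟨x, rfl, (run_eq_some_iff_of_isSuccLimit _ _ hlam).2 ⟨γ, hγ, fun η hη hγη => ?_⟩⟩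
    obtain ⟨x', hx', hη'⟩ := ih η hη (hst η hη hγη)
    rwa [hg hx'] at hη'

theorem run_eqOn {V : Set Cl} {f f' : Cl → Option X} (hf : EqOn f f' V) {θ : Ordinal.{v}}
    (hV : ∀ η < θ, MapsTo ⇑(σ η)⁻¹ V V) : EqOn (run σ f θ) (run σ f' θ) V := by
  induction θ using Ordinal.limitRecOn with
  | zero => rwa [run_zero, run_zero]
  | add_one θ ih =>
    intro c hc
    rw [run_add_one, run_add_one]
    exact ih (fun η hη => hV η (hη.trans (Order.lt_add_one_iff.2 le_rfl)))
      (hV θ (Order.lt_add_one_iff.2 le_rfl) hc)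
  | limit lam hlam ih =>
    intro c hc
    rw [run_of_isSuccLimit _ _ hlam, run_of_isSuccLimit _ _ hlam]
    congr 1
    funext η hη
    exact ih η hη (fun ζ hζ => hV ζ (hζ.trans hη)) hc

theorem run_pi_eq_some {I : Type w} [Finite I] (f : I → Cl → X) {x : I → X} {θ : Ordinal.{v}}
    {c : Cl} (h : ∀ i, run σ (fun d => some (f i d)) θ c = some (x i)) :
    run σ (fun d => some fun i => f i d) θ c = some x := by
  induction θ using Ordinal.limitRecOn generalizing c with
  | zero =>
    simp only [run_zero, Option.some_inj] at h ⊢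
    exact funext h
  | add_one θ ih => simp only [run_add_one] at h ⊢; exact ih h
  | limit lam hlam ih =>
    simp only [run_eq_some_iff_of_isSuccLimit _ _ hlam] at h ⊢
    choose γ hγ hst using h
    have := Fintype.ofFinite I
    have hsup : Finset.univ.sup γ < lam :=
      (Finset.sup_lt_iff (by simpa using hlam.bot_lt)).2 fun i _ => hγ i
    exact ⟨_, hsup, fun η hη hle => ih η hη fun i =>
      hst i η hη ((Finset.le_sup (Finset.mem_univ i)).trans hle)⟩

theorem run_id_ne_none_of_forall_configuration {τ : Ordinal.{v} → Equiv.Perm Cl}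
    {θ θ' : Ordinal.{v}} {V : Set Cl} (hV : V.Finite) (hτV : ∀ η < θ', MapsTo ⇑(τ η)⁻¹ V V)
    {c : Cl} (hc : c ∈ V) (hστ : ∀ f : Cl → Option Color, run τ f θ' c = run σ f θ c)
    (hσ : run σ (fun d => some d) θ c ≠ none) : run τ (fun d => some d) θ' c ≠ none := by
  classical
  have := hV.to_subtype
  obtain ⟨e, he⟩ := Option.ne_none_iff_exists'.1 hσ
  let r : Cl → V := fun d => if hd : d ∈ V then ⟨d, hd⟩ else ⟨c, hc⟩
  have hr : EqOn (fun d => some (r d : Cl)) (fun d => some d) V := fun d hd => by simp [r, hd]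
  let indicators : V → V → Color := fun x v => if v = x then .red else .white
  have hinj : Injective indicators := fun x y hxy => by
    simpa [indicators] using congrFun hxy x
  have hcomponent (v : V) : run τ (fun d => some (indicators (r d) v)) θ' c =
      some (indicators (r e) v) := by
    rw [hστ]
    exact run_map_eq_some (fun d => indicators (r d) v) he
  obtain ⟨x, -, hx⟩ := exists_run_eq_some_of_run_map_eq_some hinj (f := fun d => some (r d))
    (run_pi_eq_some (fun v d => indicators (r d) v) hcomponent)
  have hval : run τ (fun d => some (r d : Cl)) θ' c = some x :=
    run_map_eq_some Subtype.val (f := fun d => some (r d)) hx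
  rw [← run_eqOn hr hτV hc, hval]
  exact Option.some_ne_none _

end Run

section Clusters

variable {L : Type u}

def ExtCoord.unsign : ExtCoord L → ExtCoord L
  | .neg r => .pos r
  | .zero => .zero
  | .pos r => .pos r
  | .negInf => .posInf
  | .posInf => .posInf

@[simp] theorem ExtCoord.unsign_reflect (a : ExtCoord L) : a.reflect.unsign = a.unsign := by
  cases a <;> rfl

theorem ExtCoord.eq_or_eq_reflect_unsign (a : ExtCoord L) :
    a = a.unsign ∨ a = a.unsign.reflect := by
  cases a <;> simp [unsign, reflect]

theorem ExtCoord.finite_unsign_preimage {s : Set (ExtCoord L)} (hs : s.Finite) :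
    (ExtCoord.unsign ⁻¹' s).Finite :=
  hs.preimage' fun b _ => ((finite_singleton b.reflect).insert b).subset fun a ha => by
    rw [mem_preimage, mem_singleton_iff] at ha
    subst ha
    exact a.eq_or_eq_reflect_unsign

def unsignedCoords (p : Triple L) : Multiset (ExtCoord L) :=
  p.1.unsign ::ₘ p.2.1.unsign ::ₘ p.2.2.unsign ::ₘ 0

theorem unsignedCoords_rot (i : Axis) (p : Triple L) :
    unsignedCoords (rot i p) = unsignedCoords p := by
  cases i <;> simp only [unsignedCoords, rot, ExtCoord.unsign_reflect, Multiset.cons_swap]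

theorem unsignedCoords_quarterTurn (i : Axis) (α : ExtCoord L) (c : Cell L) :
    unsignedCoords (quarterTurn i α c).1 = unsignedCoords c.1 := by
  change unsignedCoords (qtTriple i α c.1) = _
  unfold qtTriple
  split_ifs
  exacts [unsignedCoords_rot i c.1, rfl]

def unsignedCoordsStabilizer (L : Type u) : Subgroup (Equiv.Perm (Cell L)) where
  carrier := {π | ∀ c, unsignedCoords (π c).1 = unsignedCoords c.1}
  mul_mem' hπ hπ' c := (hπ _).trans (hπ' c)
  one_mem' _ := rfl
  inv_mem' {π} hπ c := by simpa using (hπ (π⁻¹ c)).symm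

theorem twistGroup_le_unsignedCoordsStabilizer :
    twistGroup L ≤ unsignedCoordsStabilizer L := by
  have hT (i : Axis) (α : ExtCoord L) : quarterTurn i α ∈ unsignedCoordsStabilizer L :=
    unsignedCoords_quarterTurn i α
  refine Subgroup.closure_le _ |>.2 ?_
  rintro π ⟨i, α, rfl | rfl | rfl⟩
  exacts [hT i α, pow_mem (hT i α) 2, inv_mem (hT i α)]

theorem finite_unsignedCoords_fiber (k : Multiset (ExtCoord L)) :
    {d : Cell L | unsignedCoords d.1 = k}.Finite := by
  have hA := ExtCoord.finite_unsign_preimage k.finite_toSet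
  refine ((hA.prod (hA.prod hA)).preimage Subtype.val_injective.injOn).subset ?_
  rintro d rfl
  simp [unsignedCoords]

theorem mem_cluster_self (c : Cell L) : c ∈ cluster c :=
  ⟨1, one_mem _, rfl⟩

theorem cluster_finite (c : Cell L) : (cluster c).Finite :=
  (finite_unsignedCoords_fiber (unsignedCoords c.1)).subset <| by
    rintro _ ⟨g, hg, rfl⟩
    exact twistGroup_le_unsignedCoordsStabilizer hg c

theorem mapsTo_inv_cluster {π : Equiv.Perm (Cell L)} (hπ : IsBasic L π) (c : Cell L) :
    MapsTo ⇑π⁻¹ (cluster c) (cluster c) := by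
  rintro _ ⟨g, hg, rfl⟩
  exact ⟨π⁻¹ * g, mul_mem (inv_mem (Subgroup.subset_closure hπ)) hg, rfl⟩

end Clusters

end InfRubik

open InfRubik in
theorem univConv_closed_under_sim_general {L : Type u} (s t : BasicSeq L)
    (hs : s.UnivConv) (hst : t.Sim s) : t.UnivConv := fun c =>
  run_id_ne_none_of_forall_configuration (cluster_finite c)
    (fun η hη => mapsTo_inv_cluster (t.basic η hη) c) (mem_cluster_self c)
    (fun f => congrFun (hst f) c) (hs c)

open InfRubik in
/-- The universally convergent basic sequences on the edgeless cube are closed under the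
equivalence `∼`. -/
theorem univConv_closed_under_sim {L : Type u} [Infinite L] (s t : BasicSeq L)
    (hs : s.UnivConv) (hst : t.Sim s) : t.UnivConv :=
  univConv_closed_under_sim_general s t hs hst
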